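/- arXiv:2407.06378 — 5 statements merged into one kernel-verified Lean document; each statement's English description precedes it below -/
import Mathlib

section
/- Fix the repeated-measurement setup. Let 0 ≤ m ≤ n and assume every record probability p_m(y) is strictly positive, each conditional state ρ̂_{n|m}(y) is a faithful density matrix, and the unconditional state ρ_n is a faithful density matrix. Then the Holevo information is nonnegative: H_{n|m} ≥ 0, i.e. Σ_{y ∈ Y^m} p_m(y) S(ρ̂_{n|m}(y)) ≤ S(ρ_n). -/
open Matrix Kronecker BigOperators
open scoped ComplexOrder

/-- Matrix logarithm via the spectral functional calculus (junk value `0` off Hermitian matrices). -/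
noncomputable def matLog {n : Type*} [Fintype n] [DecidableEq n]
    (A : Matrix n n ℂ) : Matrix n n ℂ :=
  if h : A.IsHermitian then
    (h.eigenvectorUnitary : Matrix n n ℂ) *
      Matrix.diagonal (fun i => (Real.log (h.eigenvalues i) : ℂ)) *
      (star h.eigenvectorUnitary : Matrix n n ℂ)
  else 0

/-- von Neumann entropy  S(ρ) = −tr(ρ log ρ). -/
noncomputable def vnEntropy {n : Type*} [Fintype n] [DecidableEq n] (A : Matrix n n ℂ) : ℝ :=
  (-(A * matLog A).trace).re

/-- Quantum relative entropy  D(ρ‖σ) = tr(ρ log ρ) − tr(ρ log σ). -/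
noncomputable def relEnt {n : Type*} [Fintype n] [DecidableEq n] (ρ σ : Matrix n n ℂ) : ℝ :=
  ((ρ * matLog ρ).trace - (ρ * matLog σ).trace).re

/-- A density matrix: positive semidefinite with unit trace. -/
def IsDensityMatrix {n : Type*} [Fintype n] (ρ : Matrix n n ℂ) : Prop :=
  ρ.PosSemidef ∧ ρ.trace = 1

/-- A faithful density matrix: positive definite with unit trace. -/
def IsFaithfulDensityMatrix {n : Type*} [Fintype n] (ρ : Matrix n n ℂ) : Prop :=
  ρ.PosDef ∧ ρ.trace = 1

/-- Partial trace over the ancilla (second factor). -/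
noncomputable def trA {d k : ℕ} (X : Matrix (Fin d × Fin k) (Fin d × Fin k) ℂ) :
    Matrix (Fin d) (Fin d) ℂ :=
  Matrix.of fun i i' => ∑ j : Fin k, X (i, j) (i', j)

/-- Partial trace over the system (first factor). -/
noncomputable def trS {d k : ℕ} (X : Matrix (Fin d × Fin k) (Fin d × Fin k) ℂ) :
    Matrix (Fin k) (Fin k) ℂ :=
  Matrix.of fun j j' => ∑ i : Fin d, X (i, j) (i, j')

/-- Unconditional one-step map  𝓥_s(ρ) = tr_a(V (ρ ⊗ σ) V*). -/
noncomputable def Vs {d k : ℕ} (V : Matrix (Fin d × Fin k) (Fin d × Fin k) ℂ)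
    (σ : Matrix (Fin k) (Fin k) ℂ) (ρ : Matrix (Fin d) (Fin d) ℂ) :
    Matrix (Fin d) (Fin d) ℂ :=
  trA (V * (ρ ⊗ₖ σ) * Vᴴ)

/-- Measurement map  𝓜_y(ρ) = tr_a((1 ⊗ M_y) V (ρ ⊗ σ) V* (1 ⊗ M_y)*). -/
noncomputable def Meas {d k : ℕ} (V : Matrix (Fin d × Fin k) (Fin d × Fin k) ℂ)
    (σ : Matrix (Fin k) (Fin k) ℂ) (M : Matrix (Fin k) (Fin k) ℂ)
    (ρ : Matrix (Fin d) (Fin d) ℂ) : Matrix (Fin d) (Fin d) ℂ :=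
  trA ((((1 : Matrix (Fin d) (Fin d) ℂ)) ⊗ₖ M) * (V * (ρ ⊗ₖ σ) * Vᴴ) *
      (((1 : Matrix (Fin d) (Fin d) ℂ)) ⊗ₖ M)ᴴ)

/-- The unnormalized conditioned state  𝓜_{y_m} ∘ ⋯ ∘ 𝓜_{y_1}(ρ₀). -/
noncomputable def measChain {d k : ℕ} {Y : Type} (V : Matrix (Fin d × Fin k) (Fin d × Fin k) ℂ)
    (σ : Matrix (Fin k) (Fin k) ℂ) (M : Y → Matrix (Fin k) (Fin k) ℂ)
    (ρ₀ : Matrix (Fin d) (Fin d) ℂ) : (m : ℕ) → (Fin m → Y) → Matrix (Fin d) (Fin d) ℂ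
  | 0, _ => ρ₀
  | (m + 1), y => Meas V σ (M (y (Fin.last m))) (measChain V σ M ρ₀ m (fun i => y i.castSucc))

/-- The probability  p_m(y)  of the record y. -/
noncomputable def recProb {d k : ℕ} {Y : Type} (V : Matrix (Fin d × Fin k) (Fin d × Fin k) ℂ)
    (σ : Matrix (Fin k) (Fin k) ℂ) (M : Y → Matrix (Fin k) (Fin k) ℂ)
    (ρ₀ : Matrix (Fin d) (Fin d) ℂ) (m : ℕ) (y : Fin m → Y) : ℝ :=
  (measChain V σ M ρ₀ m y).trace.re

/-- The conditional state  ρ̂_{n|m}(y) = 𝓥_s^{n−m}(𝓜_{y_m} ∘ ⋯ ∘ 𝓜_{y_1}(ρ₀)) / p_m(y). -/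
noncomputable def condState {d k : ℕ} {Y : Type} (V : Matrix (Fin d × Fin k) (Fin d × Fin k) ℂ)
    (σ : Matrix (Fin k) (Fin k) ℂ) (M : Y → Matrix (Fin k) (Fin k) ℂ)
    (ρ₀ : Matrix (Fin d) (Fin d) ℂ) (n m : ℕ) (y : Fin m → Y) :
    Matrix (Fin d) (Fin d) ℂ :=
  ((recProb V σ M ρ₀ m y : ℂ))⁻¹ • (Vs V σ)^[n - m] (measChain V σ M ρ₀ m y)

/-- The unconditional state  ρ_n = 𝓥_s^n(ρ₀). -/
noncomputable def uncondState {d k : ℕ} (V : Matrix (Fin d × Fin k) (Fin d × Fin k) ℂ)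
    (σ : Matrix (Fin k) (Fin k) ℂ) (ρ₀ : Matrix (Fin d) (Fin d) ℂ) (n : ℕ) :
    Matrix (Fin d) (Fin d) ℂ :=
  (Vs V σ)^[n] ρ₀

/-- The average conditional entropy  S̄_{n|m}. -/
noncomputable def avgCondEntropy {d k : ℕ} {Y : Type} [Fintype Y]
    (V : Matrix (Fin d × Fin k) (Fin d × Fin k) ℂ)
    (σ : Matrix (Fin k) (Fin k) ℂ) (M : Y → Matrix (Fin k) (Fin k) ℂ)
    (ρ₀ : Matrix (Fin d) (Fin d) ℂ) (n m : ℕ) : ℝ :=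
  ∑ y : Fin m → Y, recProb V σ M ρ₀ m y * vnEntropy (condState V σ M ρ₀ n m y)

/-- The Holevo information  H_{n|m} = S(ρ_n) − S̄_{n|m}. -/
noncomputable def holevoInfo {d k : ℕ} {Y : Type} [Fintype Y]
    (V : Matrix (Fin d × Fin k) (Fin d × Fin k) ℂ)
    (σ : Matrix (Fin k) (Fin k) ℂ) (M : Y → Matrix (Fin k) (Fin k) ℂ)
    (ρ₀ : Matrix (Fin d) (Fin d) ℂ) (n m : ℕ) : ℝ :=
  vnEntropy (uncondState V σ ρ₀ n) - avgCondEntropy V σ M ρ₀ n m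

/-!
Because the Kraus operators are complete, `∑_y 𝓜_y = 𝓥_s`, so the unconditional state is the
`p_m`-mixture of the conditional states. For any mixture `ρ̄ = ∑ p_y ρ_y` one has
`S(ρ̄) - ∑ p_y S(ρ_y) = ∑ p_y D(ρ_y ‖ ρ̄)`, and Klein's inequality `D ≥ 0` follows by writing both
traces in the eigenbases `(u_i)`, `(v_j)`: with the doubly stochastic `P_ij = |⟨u_i, v_j⟩|²`,
`∑ λ_i P_ij (log μ_j - log λ_i) ≤ ∑ P_ij (μ_j - λ_i) = 0` by `log x ≤ x - 1`.
-/

section PartialTrace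

variable {d k : ℕ}

lemma trA_add (X Y : Matrix (Fin d × Fin k) (Fin d × Fin k) ℂ) :
    trA (X + Y) = trA X + trA Y := by
  ext i i'
  simp [trA, Finset.sum_add_distrib]

lemma trA_sum {ι : Type*} (s : Finset ι) (X : ι → Matrix (Fin d × Fin k) (Fin d × Fin k) ℂ) :
    trA (∑ y ∈ s, X y) = ∑ y ∈ s, trA (X y) := by
  ext i i'
  simp only [trA, of_apply, Matrix.sum_apply]
  exact Finset.sum_comm

lemma trA_one_kronecker_mul (A : Matrix (Fin k) (Fin k) ℂ)
    (X : Matrix (Fin d × Fin k) (Fin d × Fin k) ℂ) :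
    trA ((1 ⊗ₖ A) * X) = trA (X * (1 ⊗ₖ A)) := by
  ext i i'
  simp only [trA, of_apply, mul_apply, kroneckerMap_apply, one_apply, Fintype.sum_prod_type,
    ite_mul, zero_mul, one_mul, mul_ite, mul_zero, Finset.sum_ite_irrel,
    Finset.sum_const_zero, Finset.sum_ite_eq, Finset.sum_ite_eq', Finset.mem_univ, if_true]
  rw [Finset.sum_comm]
  simp [mul_comm]

end PartialTrace

lemma kronecker_sum {R ι l m n p : Type*} [NonUnitalNonAssocSemiring R] (A : Matrix l m R)
    (s : Finset ι) (B : ι → Matrix n p R) : A ⊗ₖ (∑ y ∈ s, B y) = ∑ y ∈ s, A ⊗ₖ B y := by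
  ext ⟨i, j⟩ ⟨i', j'⟩
  simp [Matrix.sum_apply, Finset.mul_sum]

section Channels

variable {d k : ℕ} (V : Matrix (Fin d × Fin k) (Fin d × Fin k) ℂ) (σ : Matrix (Fin k) (Fin k) ℂ)

lemma sum_Meas {Y : Type*} [Fintype Y] (M : Y → Matrix (Fin k) (Fin k) ℂ)
    (hM : ∑ y, (M y)ᴴ * M y = 1) (ρ : Matrix (Fin d) (Fin d) ℂ) :
    ∑ y, Meas V σ (M y) ρ = Vs V σ ρ := by
  set X := V * (ρ ⊗ₖ σ) * Vᴴ
  have hcycle : ∀ y, Meas V σ (M y) ρ = trA (X * (1 ⊗ₖ ((M y)ᴴ * M y))) := fun y => by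
    rw [Meas, mul_assoc, trA_one_kronecker_mul, conjTranspose_kronecker, conjTranspose_one,
      mul_assoc, ← mul_kronecker_mul, Matrix.one_mul]
  simp only [hcycle, ← trA_sum, ← Matrix.mul_sum, ← kronecker_sum, hM, one_kronecker_one,
    Matrix.mul_one]
  rfl

noncomputable def Vs.addMonoidEnd : AddMonoid.End (Matrix (Fin d) (Fin d) ℂ) where
  toFun := Vs V σ
  map_zero' := by ext; simp [Vs, trA]
  map_add' ρ₁ ρ₂ := by
    rw [Vs, add_kronecker, Matrix.mul_add, Matrix.add_mul, trA_add]
    rfl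

lemma Vs_sum {ι : Type*} (s : Finset ι) (ρ : ι → Matrix (Fin d) (Fin d) ℂ) :
    Vs V σ (∑ x ∈ s, ρ x) = ∑ x ∈ s, Vs V σ (ρ x) :=
  map_sum (Vs.addMonoidEnd V σ) ρ s

lemma Vs_iterate_sum {ι : Type*} (t : ℕ) (s : Finset ι) (ρ : ι → Matrix (Fin d) (Fin d) ℂ) :
    (Vs V σ)^[t] (∑ x ∈ s, ρ x) = ∑ x ∈ s, (Vs V σ)^[t] (ρ x) :=
  map_sum (Vs.addMonoidEnd V σ ^ t) ρ s

lemma sum_measChain {Y : Type} [Fintype Y] (M : Y → Matrix (Fin k) (Fin k) ℂ)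
    (hM : ∑ y, (M y)ᴴ * M y = 1) (ρ₀ : Matrix (Fin d) (Fin d) ℂ) (m : ℕ) :
    ∑ y : Fin m → Y, measChain V σ M ρ₀ m y = (Vs V σ)^[m] ρ₀ := by
  induction m with
  | zero => simp [measChain]
  | succ m ih =>
    have hsnoc : ∀ (f : Fin m → Y) (a : Y), measChain V σ M ρ₀ (m + 1)
        (Fin.snocEquiv (fun _ => Y) (a, f)) = Meas V σ (M a) (measChain V σ M ρ₀ m f) := by
      intro f a
      simp [measChain, Fin.snocEquiv]
    rw [Function.iterate_succ_apply', ← ih, Vs_sum,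
      ← Equiv.sum_comp (Fin.snocEquiv fun _ => Y), Fintype.sum_prod_type, Finset.sum_comm]
    simp only [hsnoc, sum_Meas V σ M hM]

lemma uncondState_eq_sum_smul_condState {Y : Type} [Fintype Y] (M : Y → Matrix (Fin k) (Fin k) ℂ)
    (hM : ∑ y, (M y)ᴴ * M y = 1) (ρ₀ : Matrix (Fin d) (Fin d) ℂ) {m n : ℕ} (hmn : m ≤ n)
    (hp : ∀ y : Fin m → Y, recProb V σ M ρ₀ m y ≠ 0) :
    uncondState V σ ρ₀ n = ∑ y, (recProb V σ M ρ₀ m y : ℂ) • condState V σ M ρ₀ n m y := by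
  have hunnormalize : ∀ y, (recProb V σ M ρ₀ m y : ℂ) • condState V σ M ρ₀ n m y
      = (Vs V σ)^[n - m] (measChain V σ M ρ₀ m y) := fun y => by
    rw [condState, smul_smul, mul_inv_cancel₀ (Complex.ofReal_ne_zero.mpr (hp y)), one_smul]
  rw [Finset.sum_congr rfl fun y _ => hunnormalize y, ← Vs_iterate_sum, sum_measChain V σ M hM,
    ← Function.iterate_add_apply, Nat.sub_add_cancel hmn, uncondState]

end Channels

section Klein

variable {ι : Type*} [Fintype ι] [DecidableEq ι]

lemma normSq_apply_mem_doublyStochastic {A : Matrix ι ι ℂ} (hA : A ∈ unitaryGroup ι ℂ) :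
    Matrix.of (fun i j => Complex.normSq (A i j)) ∈ doublyStochastic ℝ ι := by
  have hdiag : ∀ {B C : Matrix ι ι ℂ}, B * C = 1 → ∀ i,
      ∑ j, (B i j * C j i) = 1 := fun h i => by rw [← mul_apply, h, one_apply_eq]
  refine mem_doublyStochastic_iff_sum.mpr ⟨fun i j => Complex.normSq_nonneg _, fun i => ?_,
    fun j => ?_⟩
  · have := hdiag (mem_unitaryGroup_iff.mp hA) i
    simp only [star_apply, Complex.star_def, Complex.mul_conj] at this
    exact_mod_cast this
  · have := hdiag (mem_unitaryGroup_iff'.mp hA) j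
    simp only [star_apply, Complex.star_def, mul_comm (starRingEnd ℂ _), Complex.mul_conj] at this
    exact_mod_cast this

lemma sum_mul_log_le_of_mem_doublyStochastic {P : Matrix ι ι ℝ} (hP : P ∈ doublyStochastic ℝ ι)
    {a b : ι → ℝ} (ha : ∀ i, 0 < a i) (hb : ∀ j, 0 < b j) (hab : ∑ i, a i = ∑ j, b j) :
    ∑ i, ∑ j, a i * P i j * Real.log (b j) ≤ ∑ i, a i * Real.log (a i) := by
  have hpoint : ∀ i j, a i * (Real.log (b j) - Real.log (a i)) ≤ b j - a i := fun i j => by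
    calc a i * (Real.log (b j) - Real.log (a i)) = a i * Real.log (b j / a i) := by
          rw [Real.log_div (hb j).ne' (ha i).ne']
      _ ≤ a i * (b j / a i - 1) :=
          mul_le_mul_of_nonneg_left (Real.log_le_sub_one_of_pos (div_pos (hb j) (ha i))) (ha i).le
      _ = b j - a i := by field_simp [(ha i).ne']
  have hrow := sum_row_of_mem_doublyStochastic hP
  have hcol := sum_col_of_mem_doublyStochastic hP
  suffices ∑ i, ∑ j, P i j * (a i * (Real.log (b j) - Real.log (a i))) ≤ 0 by
    simp only [mul_sub, Finset.sum_sub_distrib, ← Finset.sum_mul, hrow, ← Finset.mul_sum,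
      mul_one, mul_left_comm (P _ _), ← mul_assoc] at this
    linarith
  calc ∑ i, ∑ j, P i j * (a i * (Real.log (b j) - Real.log (a i)))
      ≤ ∑ i, ∑ j, P i j * (b j - a i) := by
        gcongr with i _ j _
        exacts [nonneg_of_mem_doublyStochastic hP, hpoint i j]
    _ = 0 := by
        simp only [mul_sub, Finset.sum_sub_distrib, ← Finset.sum_mul, hrow, one_mul]
        rw [Finset.sum_comm]
        simp only [← Finset.sum_mul, hcol, one_mul, hab, sub_self]

lemma trace_conj_diagonal_mul_conj_diagonal (U W : Matrix ι ι ℂ) (a b : ι → ℝ) :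
    ((U * diagonal (fun i => (a i : ℂ)) * star U) *
        (W * diagonal (fun j => (b j : ℂ)) * star W)).trace
      = ∑ i, ∑ j, ((a i * Complex.normSq ((star U * W) i j) * b j : ℝ) : ℂ) := by
  set A := star U * W
  have hcycle : ((U * diagonal (fun i => (a i : ℂ)) * star U) *
      (W * diagonal (fun j => (b j : ℂ)) * star W)).trace
      = (diagonal (fun i => (a i : ℂ)) * (A * diagonal (fun j => (b j : ℂ)) * star A)).trace := by
    simp only [A, star_mul, star_star, Matrix.mul_assoc]
    rw [trace_mul_comm U]
    simp only [Matrix.mul_assoc]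
  have hentry : ∀ i, (A * diagonal (fun j => (b j : ℂ)) * star A) i i
      = ∑ j, ((Complex.normSq (A i j) * b j : ℝ) : ℂ) := fun i => by
    rw [mul_apply]
    refine Finset.sum_congr rfl fun j _ => ?_
    rw [mul_diagonal, star_apply, Complex.star_def, Complex.ofReal_mul,
      Complex.normSq_eq_conj_mul_self]
    ring
  rw [hcycle, trace]
  simp only [diag_apply, diagonal_mul, hentry, Finset.mul_sum]
  simp only [Complex.ofReal_mul, mul_assoc]

lemma re_trace_mul_matLog {ρ τ : Matrix ι ι ℂ} (hρ : ρ.IsHermitian) (hτ : τ.IsHermitian) :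
    (ρ * matLog τ).trace.re = ∑ i, ∑ j, hρ.eigenvalues i *
      Complex.normSq ((star (hρ.eigenvectorUnitary : Matrix ι ι ℂ) * hτ.eigenvectorUnitary) i j) *
        Real.log (hτ.eigenvalues j) := by
  conv_lhs => rw [hρ.spectral_theorem, matLog, dif_pos hτ]
  rw [Unitary.conjStarAlgAut_apply]
  erw [trace_conj_diagonal_mul_conj_diagonal]
  simp only [Complex.re_sum, Complex.ofReal_re]
  rfl

lemma re_trace_mul_matLog_self {ρ : Matrix ι ι ℂ} (hρ : ρ.IsHermitian) :
    (ρ * matLog ρ).trace.re = ∑ i, hρ.eigenvalues i * Real.log (hρ.eigenvalues i) := by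
  rw [re_trace_mul_matLog hρ hρ, mem_unitaryGroup_iff'.mp hρ.eigenvectorUnitary.2]
  simp [one_apply, apply_ite]

lemma relEnt_nonneg {ρ τ : Matrix ι ι ℂ} (hρ : IsFaithfulDensityMatrix ρ)
    (hτ : IsFaithfulDensityMatrix τ) : 0 ≤ relEnt ρ τ := by
  obtain ⟨hρpos, hρtr⟩ := hρ
  obtain ⟨hτpos, hτtr⟩ := hτ
  have htr : ∑ i, hρpos.1.eigenvalues i = ∑ j, hτpos.1.eigenvalues j := by
    have := (hρpos.1.trace_eq_sum_eigenvalues.symm.trans hρtr).trans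
      (hτpos.1.trace_eq_sum_eigenvalues.symm.trans hτtr).symm
    exact_mod_cast this
  have hklein := sum_mul_log_le_of_mem_doublyStochastic
    (normSq_apply_mem_doublyStochastic
      (mul_mem (Unitary.star_mem hρpos.1.eigenvectorUnitary.2) hτpos.1.eigenvectorUnitary.2))
    hρpos.eigenvalues_pos hτpos.eigenvalues_pos htr
  simp only [of_apply] at hklein
  rw [relEnt, Complex.sub_re, re_trace_mul_matLog_self hρpos.1, re_trace_mul_matLog hρpos.1 hτpos.1]
  linarith

end Klein

lemma vnEntropy_sum_smul_sub_eq_sum_mul_relEnt {n ι : Type*} [Fintype n] [DecidableEq n]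
    [Fintype ι] (p : ι → ℝ) (ρ : ι → Matrix n n ℂ) :
    vnEntropy (∑ i, (p i : ℂ) • ρ i) - ∑ i, p i * vnEntropy (ρ i)
      = ∑ i, p i * relEnt (ρ i) (∑ i, (p i : ℂ) • ρ i) := by
  have hmix : ∀ L : Matrix n n ℂ,
      ((∑ i, (p i : ℂ) • ρ i) * L).trace.re = ∑ i, p i * (ρ i * L).trace.re := fun L => by
    simp only [Finset.sum_mul, trace_sum, smul_mul_assoc, trace_smul, smul_eq_mul,
      Complex.re_sum, Complex.re_ofReal_mul]
  simp only [vnEntropy, relEnt, Complex.neg_re, Complex.sub_re, mul_sub, mul_neg,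
    Finset.sum_sub_distrib, Finset.sum_neg_distrib, hmix]
  ring

theorem holevo_nonneg_general {d k : ℕ} {Y : Type} [Fintype Y]
    (V : Matrix (Fin d × Fin k) (Fin d × Fin k) ℂ)
    (σ : Matrix (Fin k) (Fin k) ℂ)
    (M : Y → Matrix (Fin k) (Fin k) ℂ)
    (hM : ∑ y : Y, (M y)ᴴ * M y = 1)
    (ρ₀ : Matrix (Fin d) (Fin d) ℂ)
    (m n : ℕ) (hmn : m ≤ n)
    (hp : ∀ y : Fin m → Y, 0 < recProb V σ M ρ₀ m y)
    (hcond : ∀ y : Fin m → Y, IsFaithfulDensityMatrix (condState V σ M ρ₀ n m y))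
    (hρn : IsFaithfulDensityMatrix (uncondState V σ ρ₀ n)) :
    0 ≤ holevoInfo V σ M ρ₀ n m ∧
      avgCondEntropy V σ M ρ₀ n m ≤ vnEntropy (uncondState V σ ρ₀ n) := by
  have hmix := uncondState_eq_sum_smul_condState V σ M hM ρ₀ hmn fun y => (hp y).ne'
  have hdecomp : holevoInfo V σ M ρ₀ n m
      = ∑ y, recProb V σ M ρ₀ m y * relEnt (condState V σ M ρ₀ n m y) (uncondState V σ ρ₀ n) := by
    rw [holevoInfo, avgCondEntropy, hmix, vnEntropy_sum_smul_sub_eq_sum_mul_relEnt]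
  have hnonneg : 0 ≤ holevoInfo V σ M ρ₀ n m := hdecomp ▸
    Finset.sum_nonneg fun y _ => mul_nonneg (hp y).le (relEnt_nonneg (hcond y) hρn)
  exact ⟨hnonneg, sub_nonneg.mp hnonneg⟩

/-- the Holevo information is nonnegative. -/
theorem holevo_nonneg {d k : ℕ} {Y : Type} [Fintype Y]
    (V : Matrix (Fin d × Fin k) (Fin d × Fin k) ℂ)
    (hV : V ∈ Matrix.unitaryGroup (Fin d × Fin k) ℂ)
    (σ : Matrix (Fin k) (Fin k) ℂ) (hσ : IsDensityMatrix σ)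
    (M : Y → Matrix (Fin k) (Fin k) ℂ)
    (hM : ∑ y : Y, (M y)ᴴ * M y = 1)
    (ρ₀ : Matrix (Fin d) (Fin d) ℂ) (hρ₀ : IsDensityMatrix ρ₀)
    (m n : ℕ) (hmn : m ≤ n)
    (hp : ∀ y : Fin m → Y, 0 < recProb V σ M ρ₀ m y)
    (hcond : ∀ y : Fin m → Y, IsFaithfulDensityMatrix (condState V σ M ρ₀ n m y))
    (hρn : IsFaithfulDensityMatrix (uncondState V σ ρ₀ n)) :
    0 ≤ holevoInfo V σ M ρ₀ n m ∧
      avgCondEntropy V σ M ρ₀ n m ≤ vnEntropy (uncondState V σ ρ₀ n) :=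
  holevo_nonneg_general V σ M hM ρ₀ m n hmn hp hcond hρn
end

section
/- Let V be a unitary matrix on ℂ^d ⊗ ℂ^k, let ρ be a faithful density matrix on ℂ^d and σ a faithful density matrix on ℂ^k. Define ρ' = tr_a(V (ρ ⊗ σ) V*) and 𝓕σ = tr_s(V (ρ ⊗ σ) V*), and assume ρ' and 𝓕σ are faithful. Then S(ρ') − S(ρ) + S(𝓕σ) − S(σ) ≥ 0. -/
open Matrix Kronecker BigOperators
open scoped ComplexOrder

/-! Because `V` is unitary and `ρ ⊗ σ` is a product state, `X = V (ρ ⊗ σ) V*` has entropy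
`S(ρ) + S(σ)`, so the claim is subadditivity `S(X) ≤ S(tr_a X) + S(tr_s X)`. This is Klein's
inequality `D(X ‖ tr_a X ⊗ tr_s X) ≥ 0`: since `log (A ⊗ B) = log A ⊗ 1 + 1 ⊗ log B`, the
cross term `tr (X log (tr_a X ⊗ tr_s X))` equals `-S(tr_a X) - S(tr_s X)`. In eigenbases
`(uᵢ)` of `X` and `(wⱼ)` of the product, Klein's inequality is the scalar bound
`p log q ≤ p log p - p + q` averaged against the doubly stochastic matrix `|⟨uᵢ, wⱼ⟩|²`. -/

section Spectral

variable {n : Type*} [Fintype n] [DecidableEq n]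

theorem Matrix.IsHermitian.eq_conj_diagonal_eigenvalues {A : Matrix n n ℂ}
    (hA : A.IsHermitian) :
    A = (hA.eigenvectorUnitary : Matrix n n ℂ) * diagonal (fun i => (hA.eigenvalues i : ℂ)) *
      star (hA.eigenvectorUnitary : Matrix n n ℂ) := by
  simpa [Function.comp_def] using hA.spectral_theorem

theorem Matrix.IsHermitian.sum_eigenvalues_eq_one {A : Matrix n n ℂ} (hA : A.IsHermitian)
    (hA₁ : A.trace = 1) : ∑ i, hA.eigenvalues i = 1 := by
  have := hA.trace_eq_sum_eigenvalues.symm.trans hA₁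
  rwa [← RCLike.ofReal_sum, ← RCLike.ofReal_one, RCLike.ofReal_inj] at this

theorem trace_unitary_conj {U : Matrix n n ℂ} (hU : U ∈ unitaryGroup n ℂ) (M : Matrix n n ℂ) :
    (U * M * star U).trace = M.trace := by
  rw [trace_mul_cycle, mem_unitaryGroup_iff'.mp hU, one_mul]

theorem mul_diagonal_comp_eq_of_mul_diagonal_eq {P : Matrix n n ℂ} {e μ : n → ℝ}
    (h : P * diagonal (fun i => (e i : ℂ)) = diagonal (fun i => (μ i : ℂ)) * P) (f : ℝ → ℝ) :
    P * diagonal (fun i => (f (e i) : ℂ)) = diagonal (fun i => (f (μ i) : ℂ)) * P := by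
  ext i j
  have hij : P i j * e j = μ i * P i j := by simpa using congr_fun₂ h i j
  simp only [mul_diagonal, diagonal_mul]
  rcases eq_or_ne (P i j) 0 with h0 | h0
  · simp [h0]
  · have : e j = μ i := by exact_mod_cast mul_left_cancel₀ h0 (hij.trans (mul_comm _ _))
    rw [this, mul_comm]

theorem matLog_unitary_conj_diagonal {U : Matrix n n ℂ} (hU : U ∈ unitaryGroup n ℂ)
    (e : n → ℝ) :
    matLog (U * diagonal (fun i => (e i : ℂ)) * star U) =
      U * diagonal (fun i => (Real.log (e i) : ℂ)) * star U := by
  set A := U * diagonal (fun i => (e i : ℂ)) * star U with hA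
  have hH : A.IsHermitian := by
    rw [hA, star_eq_conjTranspose]
    exact isHermitian_mul_mul_conjTranspose _ (isHermitian_diagonal_of_self_adjoint _
      (funext fun i => Complex.conj_ofReal (e i)))
  have hspec := hH.eq_conj_diagonal_eigenvalues
  set W : Matrix n n ℂ := (hH.eigenvectorUnitary : Matrix n n ℂ)
  have hW : W ∈ unitaryGroup n ℂ := hH.eigenvectorUnitary.2
  -- `star W * U` intertwines the two diagonalisations of `A`, hence also their logarithms.
  have hP : (star W * U) * diagonal (fun i => (e i : ℂ)) =
      diagonal (fun i => (hH.eigenvalues i : ℂ)) * (star W * U) := by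
    calc (star W * U) * diagonal (fun i => (e i : ℂ))
        = star W * A * U := by simp [hA, mul_assoc, mem_unitaryGroup_iff'.mp hU]
      _ = diagonal (fun i => (hH.eigenvalues i : ℂ)) * (star W * U) := by
        conv_lhs => rw [hspec]
        simp [← mul_assoc, mem_unitaryGroup_iff'.mp hW]
  rw [matLog, dif_pos hH]
  calc W * diagonal (fun i => (Real.log (hH.eigenvalues i) : ℂ)) * star W
      = W * (diagonal (fun i => (Real.log (hH.eigenvalues i) : ℂ)) * (star W * U)) * star U := by
        simp [mul_assoc, mem_unitaryGroup_iff.mp hU]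
    _ = _ := by
        rw [← mul_diagonal_comp_eq_of_mul_diagonal_eq hP]
        simp [← mul_assoc, mem_unitaryGroup_iff.mp hW]

theorem vnEntropy_unitary_conj_diagonal {U : Matrix n n ℂ} (hU : U ∈ unitaryGroup n ℂ)
    (e : n → ℝ) :
    vnEntropy (U * diagonal (fun i => (e i : ℂ)) * star U) = ∑ i, Real.negMulLog (e i) := by
  have hprod : U * diagonal (fun i => (e i : ℂ)) * star U *
      (U * diagonal (fun i => (Real.log (e i) : ℂ)) * star U) =
      U * diagonal (fun i => ((e i * Real.log (e i) : ℝ) : ℂ)) * star U := by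
    simp [mul_assoc, ← mul_assoc (star U), mem_unitaryGroup_iff'.mp hU]
    rw [← mul_assoc (diagonal _), diagonal_mul_diagonal]
  rw [vnEntropy, matLog_unitary_conj_diagonal hU, hprod, trace_unitary_conj hU, trace_diagonal]
  simp [Real.negMulLog]

theorem trace_unitary_conj_diagonal_mul_unitary_conj_diagonal {U W : Matrix n n ℂ}
    (hU : U ∈ unitaryGroup n ℂ) (p r : n → ℝ) :
    (U * diagonal (fun i => (p i : ℂ)) * star U *
      (W * diagonal (fun j => (r j : ℂ)) * star W)).trace =
      ∑ i, ∑ j, Complex.normSq ((star U * W) i j) * (p i * r j) := by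
  set Q := star U * W with hQ
  calc _ = (diagonal (fun i => (p i : ℂ)) *
        (Q * diagonal (fun j => (r j : ℂ)) * star Q)).trace := by
        conv_rhs => rw [← trace_unitary_conj hU, hQ, star_mul, star_star]
        simp [mul_assoc, mem_unitaryGroup_iff.mp hU]
    _ = _ := by
        simp only [trace, diag_apply, diagonal_mul]
        simp only [mul_apply, star_apply, diagonal_apply, mul_ite, mul_zero, Finset.sum_ite_eq',
          Finset.mem_univ, if_true]
        push_cast
        refine Finset.sum_congr rfl fun i _ => ?_
        rw [Finset.mul_sum]
        refine Finset.sum_congr rfl fun j _ => ?_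
        rw [Complex.normSq_eq_conj_mul_self, Complex.star_def]
        ring

theorem mul_log_le_mul_log_sub_add {p q : ℝ} (hp : 0 ≤ p) (hq : 0 < q) :
    p * Real.log q ≤ p * Real.log p - p + q := by
  rcases hp.eq_or_lt with rfl | hp
  · simpa using hq.le
  have := Real.log_le_sub_one_of_pos (div_pos hq hp)
  rw [Real.log_div hq.ne' hp.ne', le_sub_iff_add_le, le_div_iff₀ hp] at this
  linarith

theorem sum_sum_mul_log_le_sum_mul_log {M : Matrix n n ℝ} (hM : M ∈ doublyStochastic ℝ n)
    {p q : n → ℝ} (hp : ∀ i, 0 ≤ p i) (hq : ∀ j, 0 < q j) (hpq : ∑ i, p i = ∑ j, q j) :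
    ∑ i, ∑ j, M i j * (p i * Real.log (q j)) ≤ ∑ i, p i * Real.log (p i) := by
  obtain ⟨hM0, hrow, hcol⟩ := mem_doublyStochastic_iff_sum.mp hM
  calc ∑ i, ∑ j, M i j * (p i * Real.log (q j))
      ≤ ∑ i, ∑ j, M i j * ((p i * Real.log (p i) - p i) + q j) :=
        Finset.sum_le_sum fun i _ => Finset.sum_le_sum fun j _ =>
          mul_le_mul_of_nonneg_left (by linarith [mul_log_le_mul_log_sub_add (hp i) (hq j)])
            (hM0 i j)
    _ = ∑ i, (p i * Real.log (p i) - p i) + ∑ j, q j := by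
        simp only [mul_add, Finset.sum_add_distrib, ← Finset.sum_mul, hrow, one_mul]
        rw [Finset.sum_comm]
        simp only [← Finset.sum_mul, hcol, one_mul]
    _ = ∑ i, p i * Real.log (p i) := by rw [Finset.sum_sub_distrib, ← hpq]; ring

theorem normSq_mem_doublyStochastic {U : Matrix n n ℂ} (hU : U ∈ unitaryGroup n ℂ) :
    of (fun i j => Complex.normSq (U i j)) ∈ doublyStochastic ℝ n := by
  refine mem_doublyStochastic_iff_sum.mpr ⟨fun i j => Complex.normSq_nonneg _, fun i => ?_,
    fun j => ?_⟩
  · have := congr_fun₂ (mem_unitaryGroup_iff.mp hU) i i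
    simp only [mul_apply, star_apply, one_apply_eq, Complex.star_def, Complex.mul_conj] at this
    exact_mod_cast this
  · have := congr_fun₂ (mem_unitaryGroup_iff'.mp hU) j j
    simp only [mul_apply, star_apply, one_apply_eq, Complex.star_def,
      ← Complex.normSq_eq_conj_mul_self] at this
    exact_mod_cast this

theorem relEnt_nonneg_s4 {A B : Matrix n n ℂ} (hA : IsDensityMatrix A)
    (hB : IsFaithfulDensityMatrix B) : 0 ≤ relEnt A B := by
  have hA_eq := hA.1.1.eq_conj_diagonal_eigenvalues
  have hB_eq := hB.1.1.eq_conj_diagonal_eigenvalues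
  set p := hA.1.1.eigenvalues
  set q := hB.1.1.eigenvalues
  have hpq : ∑ i, p i = ∑ j, q j :=
    (hA.1.1.sum_eigenvalues_eq_one hA.2).trans (hB.1.1.sum_eigenvalues_eq_one hB.2).symm
  have hU := hA.1.1.eigenvectorUnitary.2
  have hW := hB.1.1.eigenvectorUnitary.2
  set U : Matrix n n ℂ := (hA.1.1.eigenvectorUnitary : Matrix n n ℂ)
  set W : Matrix n n ℂ := (hB.1.1.eigenvectorUnitary : Matrix n n ℂ)
  have hrel : relEnt A B = -vnEntropy A - (A * matLog B).trace.re := by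
    simp [relEnt, vnEntropy]
  have hcross : (A * matLog B).trace.re =
      ∑ i, ∑ j, of (fun i j => Complex.normSq ((star U * W) i j)) i j * (p i * Real.log (q j)) := by
    rw [hA_eq, hB_eq, matLog_unitary_conj_diagonal hW,
      trace_unitary_conj_diagonal_mul_unitary_conj_diagonal hU]
    simp
  have hent : vnEntropy A = -∑ i, p i * Real.log (p i) := by
    rw [hA_eq, vnEntropy_unitary_conj_diagonal hU]
    simp [Real.negMulLog]
  rw [hrel, hcross, hent, neg_neg, sub_nonneg]
  exact sum_sum_mul_log_le_sum_mul_log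
    (normSq_mem_doublyStochastic (mul_mem (Unitary.star_mem hU) hW))
    hA.1.eigenvalues_nonneg hB.1.eigenvalues_pos hpq

theorem vnEntropy_unitary_conj {V : Matrix n n ℂ} (hV : V ∈ unitaryGroup n ℂ)
    {A : Matrix n n ℂ} (hA : A.IsHermitian) : vnEntropy (V * A * Vᴴ) = vnEntropy A := by
  have hU := hA.eigenvectorUnitary.2
  rw [hA.eq_conj_diagonal_eigenvalues, ← star_eq_conjTranspose,
    vnEntropy_unitary_conj_diagonal hU, ← vnEntropy_unitary_conj_diagonal (mul_mem hV hU),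
    star_mul]
  simp only [mul_assoc]

end Spectral

section Kronecker

theorem star_kronecker {R m n : Type*} [CommSemiring R] [StarRing R] (A : Matrix m m R)
    (B : Matrix n n R) : star (A ⊗ₖ B) = star A ⊗ₖ star B := by
  simp only [star_eq_conjTranspose, conjTranspose_kronecker]

variable {m n : Type*} [Fintype m] [DecidableEq m] [Fintype n] [DecidableEq n]

theorem unitary_conj_diagonal_kronecker (U : Matrix m m ℂ) (W : Matrix n n ℂ) (a : m → ℝ)
    (b : n → ℝ) :
    (U * diagonal (fun i => (a i : ℂ)) * star U) ⊗ₖ (W * diagonal (fun j => (b j : ℂ)) * star W) =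
      (U ⊗ₖ W) * diagonal (fun x : m × n => ((a x.1 * b x.2 : ℝ) : ℂ)) * star (U ⊗ₖ W) := by
  simp only [star_kronecker, mul_kronecker_mul, diagonal_kronecker_diagonal, Complex.ofReal_mul]

theorem matLog_kronecker {A : Matrix m m ℂ} {B : Matrix n n ℂ} (hA : A.PosDef) (hB : B.PosDef) :
    matLog (A ⊗ₖ B) = matLog A ⊗ₖ (1 : Matrix n n ℂ) + (1 : Matrix m m ℂ) ⊗ₖ matLog B := by
  have hU := hA.1.eigenvectorUnitary.2
  have hW := hB.1.eigenvectorUnitary.2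
  have hlog : diagonal (fun x : m × n =>
      (Real.log (hA.1.eigenvalues x.1 * hB.1.eigenvalues x.2) : ℂ)) =
      diagonal (fun i => (Real.log (hA.1.eigenvalues i) : ℂ)) ⊗ₖ (1 : Matrix n n ℂ) +
        (1 : Matrix m m ℂ) ⊗ₖ diagonal (fun j => (Real.log (hB.1.eigenvalues j) : ℂ)) := by
    rw [← diagonal_one, ← diagonal_one, diagonal_kronecker_diagonal, diagonal_kronecker_diagonal,
      diagonal_add]
    congr 1
    funext x
    rw [Real.log_mul (hA.eigenvalues_pos x.1).ne' (hB.eigenvalues_pos x.2).ne']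
    push_cast
    ring
  rw [hA.1.eq_conj_diagonal_eigenvalues, hB.1.eq_conj_diagonal_eigenvalues,
    unitary_conj_diagonal_kronecker, matLog_unitary_conj_diagonal (kronecker_mem_unitary hU hW),
    matLog_unitary_conj_diagonal hU, matLog_unitary_conj_diagonal hW, hlog]
  simp only [mul_add, add_mul, star_kronecker, ← mul_kronecker_mul, mul_one,
    mem_unitaryGroup_iff.mp hU, mem_unitaryGroup_iff.mp hW]

theorem vnEntropy_kronecker {A : Matrix m m ℂ} {B : Matrix n n ℂ} (hA : A.IsHermitian)
    (hB : B.IsHermitian) (htA : A.trace = 1) (htB : B.trace = 1) :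
    vnEntropy (A ⊗ₖ B) = vnEntropy A + vnEntropy B := by
  have ha := hA.sum_eigenvalues_eq_one htA
  have hb := hB.sum_eigenvalues_eq_one htB
  have hU := hA.eigenvectorUnitary.2
  have hW := hB.eigenvectorUnitary.2
  rw [hA.eq_conj_diagonal_eigenvalues, hB.eq_conj_diagonal_eigenvalues,
    unitary_conj_diagonal_kronecker, vnEntropy_unitary_conj_diagonal (kronecker_mem_unitary hU hW),
    vnEntropy_unitary_conj_diagonal hU, vnEntropy_unitary_conj_diagonal hW,
    Fintype.sum_prod_type]
  simp only [Real.negMulLog_mul, Finset.sum_add_distrib, ← Finset.sum_mul, ← Finset.mul_sum, ha, hb,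
    one_mul]

end Kronecker

section PartialTrace

variable {d k : ℕ}

theorem trace_mul_kronecker_one (X : Matrix (Fin d × Fin k) (Fin d × Fin k) ℂ)
    (M : Matrix (Fin d) (Fin d) ℂ) :
    (X * (M ⊗ₖ (1 : Matrix (Fin k) (Fin k) ℂ))).trace = (trA X * M).trace := by
  simp only [trace, diag_apply, mul_apply, kroneckerMap_apply, trA, one_apply, of_apply,
    Fintype.sum_prod_type, Finset.sum_mul, mul_ite, mul_one, mul_zero, Finset.sum_ite_eq',
    Finset.mem_univ, if_true]
  exact Finset.sum_congr rfl fun _ _ => Finset.sum_comm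

theorem trace_mul_one_kronecker (X : Matrix (Fin d × Fin k) (Fin d × Fin k) ℂ)
    (N : Matrix (Fin k) (Fin k) ℂ) :
    (X * ((1 : Matrix (Fin d) (Fin d) ℂ) ⊗ₖ N)).trace = (trS X * N).trace := by
  simp only [trace, diag_apply, mul_apply, kroneckerMap_apply, trS, one_apply, of_apply,
    Fintype.sum_prod_type_right, Finset.sum_mul, ite_mul, one_mul, zero_mul, mul_ite, mul_zero,
    Finset.sum_ite_eq', Finset.mem_univ, if_true]
  exact Finset.sum_congr rfl fun _ _ => Finset.sum_comm

theorem trace_trA (X : Matrix (Fin d × Fin k) (Fin d × Fin k) ℂ) : (trA X).trace = X.trace := by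
  simpa using (trace_mul_kronecker_one X 1).symm

theorem trace_trS (X : Matrix (Fin d × Fin k) (Fin d × Fin k) ℂ) : (trS X).trace = X.trace := by
  simpa using (trace_mul_one_kronecker X 1).symm

theorem relEnt_trA_kronecker_trS {X : Matrix (Fin d × Fin k) (Fin d × Fin k) ℂ}
    (hA : (trA X).PosDef) (hS : (trS X).PosDef) :
    relEnt X (trA X ⊗ₖ trS X) = vnEntropy (trA X) + vnEntropy (trS X) - vnEntropy X := by
  rw [relEnt, matLog_kronecker hA hS, mul_add, trace_add, trace_mul_kronecker_one,
    trace_mul_one_kronecker]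
  simp only [vnEntropy, Complex.sub_re, Complex.add_re, Complex.neg_re]
  ring

theorem vnEntropy_le_vnEntropy_trA_add_vnEntropy_trS
    {X : Matrix (Fin d × Fin k) (Fin d × Fin k) ℂ} (hX : IsDensityMatrix X)
    (hA : (trA X).PosDef) (hS : (trS X).PosDef) :
    vnEntropy X ≤ vnEntropy (trA X) + vnEntropy (trS X) := by
  have hτ : IsFaithfulDensityMatrix (trA X ⊗ₖ trS X) :=
    ⟨hA.kronecker hS, by rw [trace_kronecker, trace_trA, trace_trS, hX.2, one_mul]⟩
  have := relEnt_nonneg_s4 hX hτ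
  rw [relEnt_trA_kronecker_trS hA hS] at this
  linarith

end PartialTrace

/-- the entropy-change inequality from nonnegativity of the mutual
information after a system–ancilla interaction. -/
theorem entropy_increment_inequality_first {d k : ℕ}
    (V : Matrix (Fin d × Fin k) (Fin d × Fin k) ℂ)
    (hV : V ∈ Matrix.unitaryGroup (Fin d × Fin k) ℂ)
    (ρ : Matrix (Fin d) (Fin d) ℂ) (hρ : IsFaithfulDensityMatrix ρ)
    (σ : Matrix (Fin k) (Fin k) ℂ) (hσ : IsFaithfulDensityMatrix σ)
    (hρ' : (trA (V * (ρ ⊗ₖ σ) * Vᴴ)).PosDef)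
    (hF : (trS (V * (ρ ⊗ₖ σ) * Vᴴ)).PosDef) :
    0 ≤ vnEntropy (trA (V * (ρ ⊗ₖ σ) * Vᴴ)) - vnEntropy ρ +
          vnEntropy (trS (V * (ρ ⊗ₖ σ) * Vᴴ)) - vnEntropy σ := by
  have hρσ : (ρ ⊗ₖ σ).PosDef := hρ.1.kronecker hσ.1
  have hX : IsDensityMatrix (V * (ρ ⊗ₖ σ) * Vᴴ) := by
    refine ⟨hρσ.posSemidef.mul_mul_conjTranspose_same V, ?_⟩
    rw [← star_eq_conjTranspose, trace_unitary_conj hV, trace_kronecker, hρ.2, hσ.2, one_mul]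
  have hSX : vnEntropy (V * (ρ ⊗ₖ σ) * Vᴴ) = vnEntropy ρ + vnEntropy σ := by
    rw [vnEntropy_unitary_conj hV hρσ.1, vnEntropy_kronecker hρ.1.1 hσ.1.1 hρ.2 hσ.2]
  have := vnEntropy_le_vnEntropy_trA_add_vnEntropy_trS hX hρ' hF
  linarith
end

section
/- Paycha's noncommutative Taylor formula for monomials: let ρ and ε be square complex matrices of the same size, let ad_ρ(X) = ρX − Xρ, and let N ∈ ℕ. Then (ρ + ε)^N = Σ_{n=0}^{N} Σ over tuples (k₁,…,k_n) ∈ ℕ^n with k₁+⋯+k_n+n ≤ N of the term [1 / ((k₁+1)(k₁+k₂+2)⋯(k₁+⋯+k_n+n))] · (ad_ρ^{k₁}(ε)/k₁!) ⋯ (ad_ρ^{k_n}(ε)/k_n!) · (N!/(N−k₁−⋯−k_n−n)!) · ρ^{N−k₁−⋯−k_n−n}, where the n = 0 term is ρ^N and the derivative factor (N!/(N−k₁−⋯−k_n−n)!) ρ^{N−k₁−⋯−k_n−n} multiplies the ordered product of iterated commutators on the right. -/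
/-!
Induction on `N`, from `(ρ + ε) ^ (N + 1) = (ρ + ε) ^ N * ρ + (ρ + ε) ^ N * ε`. Right
multiplication by `ρ` only raises the power of `ρ` ending each term. Right multiplication by `ε`
has to move `ε` past `ρ ^ a`, and `ρ ^ a * ε = ∑ C(a, j) ad_ρ^j(ε) ρ ^ (a - j)` turns this into a
new last factor `ad_ρ^j(ε)` of the ordered product. Matching the coefficients of the term indexed
by `(k₁, …, kₙ, j)` then comes down to two identities for the falling factorial `N^(m)`,
`(N + 1)^(W + 1) = N^(W + 1) + (W + 1) N^(W)` and `N^(w + j) = j! C(N - w, j) N^(w)`, where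
`W + 1 = k₁ + ⋯ + kₙ + j + n + 1` is exactly the new factor of the denominator.
-/

open Matrix Kronecker BigOperators
open scoped ComplexOrder

noncomputable def adM {d : ℕ} (ρ X : Matrix (Fin d) (Fin d) ℂ) : Matrix (Fin d) (Fin d) ℂ :=
  ρ * X - X * ρ

open Finset LieAlgebra
open scoped Nat

attribute [local instance] LieRing.ofAssociativeRing

section Commutator

variable {R A : Type*} [CommRing R] [Ring A] [Algebra R A]

theorem pow_mul_eq_sum_choose_smul_ad_pow_mul (ρ ε : A) (a : ℕ) :
    ρ ^ a * ε = ∑ j ∈ range (a + 1), a.choose j • ((ad R A ρ ^ j) ε * ρ ^ (a - j)) := by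
  -- left multiplication by `ρ` is `ad ρ` plus right multiplication by `ρ`, and these commute
  have hsplit : LinearMap.mulLeft R ρ = ad R A ρ + LinearMap.mulRight R ρ := by
    rw [ad_eq_lmul_left_sub_lmul_right, Pi.sub_apply, sub_add_cancel]
  have hcomm : Commute (ad R A ρ) (LinearMap.mulRight R ρ) := by
    rw [ad_eq_lmul_left_sub_lmul_right, Pi.sub_apply]
    exact (LinearMap.commute_mulLeft_right ρ ρ).sub_left (Commute.refl _)
  calc ρ ^ a * ε = (LinearMap.mulLeft R ρ ^ a) ε := by rw [LinearMap.pow_mulLeft]; rfl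
    _ = _ := by
      rw [hsplit, hcomm.add_pow, LinearMap.sum_apply]
      refine sum_congr rfl fun j _ => ?_
      rw [(hcomm.pow_pow j (a - j)).eq]
      simp only [Module.End.mul_apply, Module.End.natCast_apply, map_nsmul, LinearMap.pow_mulRight,
        LinearMap.mulRight_apply]

end Commutator

theorem Nat.succ_descFactorial_succ_eq_add (n k : ℕ) :
    (n + 1).descFactorial (k + 1) = n.descFactorial (k + 1) + (k + 1) * n.descFactorial k := by
  rw [Nat.succ_descFactorial_succ, Nat.descFactorial_succ]
  rcases le_or_gt k n with h | h
  · rw [← Nat.add_mul]; congr 1; omega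
  · simp [Nat.descFactorial_eq_zero_iff_lt.mpr h]

theorem Fin.sum_tuple_succ_eq_sum_snoc {M : Type*} [AddCommMonoid M] (n B : ℕ)
    (f : (Fin (n + 1) → ℕ) → M) :
    ∑ k : Fin (n + 1) → Fin B, f (fun i => k i) =
      ∑ k : Fin n → Fin B, ∑ j ∈ range B, f (Fin.snoc (fun i => k i) j) := by
  rw [← (Fin.snocEquiv fun _ => Fin B).sum_comp, Fintype.sum_prod_type, sum_comm]
  refine sum_congr rfl fun k _ => ?_
  rw [← Fin.sum_univ_eq_sum_range (fun j => f (Fin.snoc (fun i => k i) j))]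
  exact sum_congr rfl fun j _ => congrArg f (Fin.comp_snoc Fin.val k j)

section Taylor

variable {n : ℕ}

def derivOrder (k : Fin n → ℕ) : ℕ := ∑ i, k i + n

def taylorDenom (k : Fin n → ℕ) : ℕ := ∏ i, (∑ j ∈ univ.filter (· ≤ i), k j + i + 1)

theorem derivOrder_snoc (k : Fin n → ℕ) (m : ℕ) :
    derivOrder (Fin.snoc k m : Fin (n + 1) → ℕ) = derivOrder k + m + 1 := by
  simp only [derivOrder, Fin.sum_snoc]; ring

theorem le_derivOrder (k : Fin n → ℕ) : n ≤ derivOrder k := Nat.le_add_left n _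

theorem taylorDenom_snoc (k : Fin n → ℕ) (m : ℕ) :
    taylorDenom (Fin.snoc k m : Fin (n + 1) → ℕ) = taylorDenom k * (derivOrder k + m + 1) := by
  have hprefix : ∀ i : Fin n,
      ∑ j ∈ univ.filter (· ≤ i.castSucc), (Fin.snoc k m : Fin (n + 1) → ℕ) j =
        ∑ j ∈ univ.filter (· ≤ i), k j := by
    intro i
    simp [sum_filter, Fin.sum_univ_castSucc, Fin.castSucc_lt_last i |>.not_ge]
  have hlast :
      ∑ j ∈ univ.filter (· ≤ Fin.last n), (Fin.snoc k m : Fin (n + 1) → ℕ) j = ∑ j, k j + m := by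
    simp [Fin.sum_univ_castSucc, Fin.le_last]
  simp only [taylorDenom, Fin.prod_univ_castSucc, hprefix, hlast, Fin.val_castSucc, Fin.val_last,
    derivOrder]
  ring

theorem taylorDenom_pos (k : Fin n → ℕ) : 0 < taylorDenom k :=
  prod_pos fun _ _ => Nat.succ_pos _

variable {K A : Type*} [Field K] [Ring A] [Algebra K A] (ρ ε : A)

variable (K) in
def adProd (k : Fin n → ℕ) : A :=
  (List.ofFn fun i => ((k i)! : K)⁻¹ • (ad K A ρ ^ k i) ε).prod

-- `N.descFactorial w` is `N! / (N - w)!` for `w ≤ N` and `0` otherwise, so terms of order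
-- beyond `N` vanish without a case split.
variable (K) in
def taylorTerm (N : ℕ) (k : Fin n → ℕ) : A :=
  ((N.descFactorial (derivOrder k) : K) / taylorDenom k) •
    (adProd K ρ ε k * ρ ^ (N - derivOrder k))

variable (K) in
def taylorTermMulSummand (N : ℕ) (k : Fin n → ℕ) (j : ℕ) : A :=
  ((N.descFactorial (derivOrder k) * (N - derivOrder k).choose j : K) / taylorDenom k) •
    (adProd K ρ ε k * ((ad K A ρ ^ j) ε * ρ ^ (N - derivOrder k - j)))

theorem adProd_snoc (k : Fin n → ℕ) (j : ℕ) :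
    adProd K ρ ε (Fin.snoc k j : Fin (n + 1) → ℕ) =
      adProd K ρ ε k * ((j ! : K)⁻¹ • (ad K A ρ ^ j) ε) := by
  rw [adProd, List.ofFn_succ', List.prod_concat]
  simp only [Fin.snoc_castSucc, Fin.snoc_last, adProd]

theorem taylorTerm_eq_zero_of_lt {N : ℕ} {k : Fin n → ℕ} (h : N < derivOrder k) :
    taylorTerm K ρ ε N k = 0 := by
  simp [taylorTerm, Nat.descFactorial_eq_zero_iff_lt.mpr h]

theorem taylorTerm_mul_eq_sum {N B : ℕ} (hB : N < B) (k : Fin n → ℕ) :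
    taylorTerm K ρ ε N k * ε = ∑ j ∈ range B, taylorTermMulSummand K ρ ε N k j := by
  rw [taylorTerm, smul_mul_assoc, mul_assoc, pow_mul_eq_sum_choose_smul_ad_pow_mul (R := K),
    mul_sum, smul_sum]
  refine sum_subset_zero_on_sdiff (range_subset_range.mpr (by omega)) (fun j hj => ?_)
    (fun j _ => ?_)
  · rw [taylorTermMulSummand, Nat.choose_eq_zero_of_lt (by simp at hj; omega)]
    simp
  · rw [taylorTermMulSummand, ← Nat.cast_smul_eq_nsmul K, mul_smul_comm, smul_smul,
      mul_div_right_comm]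

theorem taylorTerm_snoc (M : ℕ) (k : Fin n → ℕ) (j : ℕ) :
    taylorTerm K ρ ε M (Fin.snoc k j : Fin (n + 1) → ℕ) =
      ((M.descFactorial (derivOrder k + j + 1) : K) / (taylorDenom k * (derivOrder k + j + 1)) *
          (j ! : K)⁻¹) •
        (adProd K ρ ε k * (ad K A ρ ^ j) ε * ρ ^ (M - (derivOrder k + j + 1))) := by
  rw [taylorTerm, derivOrder_snoc, taylorDenom_snoc, adProd_snoc, mul_smul_comm, smul_mul_assoc,
    smul_smul]
  push_cast; rfl

theorem taylorTerm_succ_snoc [CharZero K] (N : ℕ) (k : Fin n → ℕ) (j : ℕ) :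
    taylorTerm K ρ ε (N + 1) (Fin.snoc k j : Fin (n + 1) → ℕ) =
      taylorTerm K ρ ε N (Fin.snoc k j : Fin (n + 1) → ℕ) * ρ +
        taylorTermMulSummand K ρ ε N k j := by
  set w := derivOrder k
  set c : K := (taylorDenom k : K)
  set Y := adProd K ρ ε k * (ad K A ρ ^ j) ε * ρ ^ (N - (w + j))
  have hlead : taylorTerm K ρ ε (N + 1) (Fin.snoc k j : Fin (n + 1) → ℕ) =
      (((N + 1).descFactorial (w + j + 1) : K) / (c * (w + j + 1)) * (j ! : K)⁻¹) • Y := by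
    rw [taylorTerm_snoc, Nat.add_sub_add_right]
  have hρ : taylorTerm K ρ ε N (Fin.snoc k j : Fin (n + 1) → ℕ) * ρ =
      ((N.descFactorial (w + j + 1) : K) / (c * (w + j + 1)) * (j ! : K)⁻¹) • Y := by
    rw [taylorTerm_snoc, smul_mul_assoc, mul_assoc, ← pow_succ]
    rcases le_or_gt (w + j + 1) N with h | h
    · rw [show N - (w + j + 1) + 1 = N - (w + j) by omega]
    · rw [Nat.descFactorial_eq_zero_iff_lt.mpr h]
      simp
  have hε : taylorTermMulSummand K ρ ε N k j =
      ((N.descFactorial w * (N - w).choose j : K) / c) • Y := by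
    rw [taylorTermMulSummand, Nat.sub_sub, ← mul_assoc]
  have hcoeff : (N + 1).descFactorial (w + j + 1) =
      N.descFactorial (w + j + 1) + (w + j + 1) * (j ! * (N - w).choose j * N.descFactorial w) := by
    have hsplit := Nat.descFactorial_mul_descFactorial (n := N) (Nat.le_add_right w j)
    rw [Nat.add_sub_cancel_left] at hsplit
    rw [← Nat.descFactorial_eq_factorial_mul_choose, hsplit, Nat.succ_descFactorial_succ_eq_add]
  rw [hlead, hρ, hε, ← add_smul, hcoeff]
  push_cast
  congr 1
  have hc : c ≠ 0 := Nat.cast_ne_zero.mpr (taylorDenom_pos k).ne'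
  have hW : (w + j + 1 : K) ≠ 0 := by exact_mod_cast (w + j).succ_ne_zero
  have hj : (j ! : K) ≠ 0 := by exact_mod_cast j.factorial_ne_zero
  field_simp

variable (K) in
def taylorSum (N B n : ℕ) : A :=
  ∑ k : Fin n → Fin B, taylorTerm K ρ ε N (fun i => k i)

theorem taylorSum_zero (N B : ℕ) : taylorSum K ρ ε N B 0 = ρ ^ N := by
  simp [taylorSum, taylorTerm, derivOrder, taylorDenom, adProd]

theorem taylorSum_eq_zero_of_lt {N n : ℕ} (B : ℕ) (h : N < n) : taylorSum K ρ ε N B n = 0 :=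
  sum_eq_zero fun _ _ => taylorTerm_eq_zero_of_lt ρ ε (h.trans_le (le_derivOrder _))

theorem taylorSum_succ_succ [CharZero K] {N B : ℕ} (hB : N < B) (n : ℕ) :
    taylorSum K ρ ε (N + 1) B (n + 1) =
      taylorSum K ρ ε N B (n + 1) * ρ + taylorSum K ρ ε N B n * ε := by
  simp only [taylorSum, Fin.sum_tuple_succ_eq_sum_snoc, taylorTerm_succ_snoc, sum_add_distrib,
    ← taylorTerm_mul_eq_sum ρ ε hB, sum_mul]

-- `M` is left free so that the induction step can use the hypothesis at both `M + 1` and `M`.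
theorem add_pow_eq_sum_taylorSum [CharZero K] {N B M : ℕ} (hB : N < B) (hM : N < M) :
    (ρ + ε) ^ N = ∑ n ∈ range M, taylorSum K ρ ε N B n := by
  induction N generalizing M with
  | zero =>
    obtain ⟨M, rfl⟩ : ∃ M', M = M' + 1 := ⟨M - 1, by omega⟩
    rw [sum_range_succ', sum_eq_zero fun n _ => taylorSum_eq_zero_of_lt ρ ε B n.succ_pos,
      taylorSum_zero, zero_add, pow_zero, pow_zero]
  | succ N ih =>
    obtain ⟨M, rfl⟩ : ∃ M', M = M' + 1 := ⟨M - 1, by omega⟩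
    calc (ρ + ε) ^ (N + 1) = (ρ + ε) ^ N * ρ + (ρ + ε) ^ N * ε := by rw [pow_succ, mul_add]
      _ = (∑ n ∈ range (M + 1), taylorSum K ρ ε N B n) * ρ +
          (∑ n ∈ range M, taylorSum K ρ ε N B n) * ε := by
        rw [← ih (by omega) (by omega), ← ih (by omega) (by omega)]
      _ = ∑ n ∈ range (M + 1), taylorSum K ρ ε (N + 1) B n := by
        rw [sum_range_succ' (taylorSum K ρ ε N B), sum_range_succ' (taylorSum K ρ ε (N + 1) B)]
        simp only [taylorSum_succ_succ ρ ε (Nat.lt_of_succ_lt hB), taylorSum_zero, sum_add_distrib,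
          add_mul, sum_mul, pow_succ]
        abel

end Taylor

theorem adM_iterate {d : ℕ} (ρ X : Matrix (Fin d) (Fin d) ℂ) (k : ℕ) :
    (adM ρ)^[k] X = (ad ℂ _ ρ ^ k) X := by
  rw [Module.End.pow_apply]; rfl

/-- Paycha's noncommutative Taylor formula for the monomial  f(z) = z^N. -/
theorem paycha_formula_monomial {d : ℕ} (ρ ε : Matrix (Fin d) (Fin d) ℂ) (N : ℕ) :
    (ρ + ε) ^ N =
      ∑ n ∈ Finset.range (N + 1),
        ∑ k : Fin n → Fin (N + 1),
          if (∑ i, (k i : ℕ)) + n ≤ N then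
            ((∏ i : Fin n,
                (((∑ j ∈ Finset.univ.filter (fun j => j ≤ i), (k j : ℕ)) + (i : ℕ) + 1 : ℕ) :
                  ℂ))⁻¹) •
              ((List.ofFn fun i : Fin n =>
                  ((Nat.factorial (k i) : ℂ))⁻¹ • (adM ρ)^[(k i : ℕ)] ε).prod *
                ((((Nat.factorial N / Nat.factorial (N - ((∑ i, (k i : ℕ)) + n)) : ℕ)) : ℂ) •
                  ρ ^ (N - ((∑ i, (k i : ℕ)) + n))))
          else 0 := by
  rw [add_pow_eq_sum_taylorSum (K := ℂ) ρ ε N.lt_add_one N.lt_add_one]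
  refine sum_congr rfl fun n _ => sum_congr rfl fun k _ => ?_
  split_ifs with h
  · rw [taylorTerm, derivOrder, taylorDenom, adProd, Nat.descFactorial_eq_div h, mul_smul_comm,
      smul_smul, div_eq_inv_mul]
    simp only [adM_iterate, Nat.cast_prod]
  · exact taylorTerm_eq_zero_of_lt ρ ε (not_le.mp h)
end

section
/- Let ρ be an invertible square complex matrix, L a square complex matrix of the same size, and ad_ρ(X) = ρX − Xρ. Then for all natural numbers k₁, k₂: tr( ρ^{−(k₁+k₂+1)} · ad_ρ^{k₁}(Lρ + ρL*) · ad_ρ^{k₂}(Lρ + ρL*) ) = tr( ρ^{−(k₁+k₂+1)} · ad_ρ^{k₁}(L) · ρ² · ad_ρ^{k₂}(L*) ) + tr( ρ^{−(k₁+k₂)} · ( ad_ρ^{k₁}(L) · ρ · ad_ρ^{k₂}(L) + ad_ρ^{k₁}(L*) · ρ · ad_ρ^{k₂}(L*) ) ) + tr( ρ^{−(k₁+k₂)+1} · ad_ρ^{k₁}(L*) · ad_ρ^{k₂}(L) ), where negative powers of ρ denote powers of ρ⁻¹ (zpow). -/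
open Matrix Kronecker BigOperators
open scoped ComplexOrder

lemma adM_iter_split {d : ℕ} (ρ : Matrix (Fin d) (Fin d) ℂ) (k : ℕ) :
    ∀ X Y : Matrix (Fin d) (Fin d) ℂ,
      (adM ρ)^[k] (X * ρ + ρ * Y) = (adM ρ)^[k] X * ρ + ρ * (adM ρ)^[k] Y := by
  induction k with
  | zero => intro X Y; simp
  | succ k ih =>
    intro X Y
    rw [Function.iterate_succ_apply, Function.iterate_succ_apply,
      Function.iterate_succ_apply]
    have : adM ρ (X * ρ + ρ * Y) = (adM ρ X) * ρ + ρ * (adM ρ Y) := by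
      simp only [adM]; noncomm_ring
    rw [this, ih]

/-- expansion of the trace appearing in the entropy production rate. -/
theorem trace_inv_pow_ad_expansion {d : ℕ} (ρ L : Matrix (Fin d) (Fin d) ℂ)
    (hρ : IsUnit ρ) (k₁ k₂ : ℕ) :
    (ρ ^ (-(k₁ + k₂ + 1 : ℤ)) * (adM ρ)^[k₁] (L * ρ + ρ * Lᴴ) *
        (adM ρ)^[k₂] (L * ρ + ρ * Lᴴ)).trace =
      (ρ ^ (-(k₁ + k₂ + 1 : ℤ)) * (adM ρ)^[k₁] L * ρ ^ 2 * (adM ρ)^[k₂] Lᴴ).trace +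
        (ρ ^ (-(k₁ + k₂ : ℤ)) *
            ((adM ρ)^[k₁] L * ρ * (adM ρ)^[k₂] L +
              (adM ρ)^[k₁] Lᴴ * ρ * (adM ρ)^[k₂] Lᴴ)).trace +
        (ρ ^ (-(k₁ + k₂ : ℤ) + 1) * ((adM ρ)^[k₁] Lᴴ * (adM ρ)^[k₂] L)).trace := by
  have hd : IsUnit ρ.det := (Matrix.isUnit_iff_isUnit_det ρ).mp hρ
  set A₁ := (adM ρ)^[k₁] L with hA₁
  set A₂ := (adM ρ)^[k₂] L with hA₂
  set B₁ := (adM ρ)^[k₁] Lᴴ with hB₁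
  set B₂ := (adM ρ)^[k₂] Lᴴ with hB₂
  set P := ρ ^ (-(k₁ + k₂ + 1 : ℤ)) with hP
  have e1 : ρ * P = ρ ^ (-(k₁ + k₂ : ℤ)) := by
    rw [hP, show (-(k₁ + k₂ : ℤ)) = 1 + -(k₁ + k₂ + 1 : ℤ) by ring,
      Matrix.zpow_add hd, zpow_one]
  have e2 : P * ρ = ρ ^ (-(k₁ + k₂ : ℤ)) := by
    rw [hP, show (-(k₁ + k₂ : ℤ)) = -(k₁ + k₂ + 1 : ℤ) + 1 by ring,
      Matrix.zpow_add hd, zpow_one]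
  have e3 : ρ * P * ρ = ρ ^ (-(k₁ + k₂ : ℤ) + 1) := by
    rw [e1, Matrix.zpow_add hd, zpow_one]
  rw [adM_iter_split, adM_iter_split, ← hA₁, ← hA₂, ← hB₁, ← hB₂]
  have t1 : (P * (A₁ * ρ) * (A₂ * ρ)).trace
      = (ρ ^ (-(k₁ + k₂ : ℤ)) * (A₁ * ρ * A₂)).trace := by
    rw [show P * (A₁ * ρ) * (A₂ * ρ) = (P * A₁ * ρ * A₂) * ρ by noncomm_ring,
      Matrix.trace_mul_comm, ← e1]
    congr 1; noncomm_ring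
  have t2 : (P * (A₁ * ρ) * (ρ * B₂)).trace = (P * A₁ * ρ ^ 2 * B₂).trace := by
    congr 1; rw [sq]; noncomm_ring
  have t3 : (P * (ρ * B₁) * (A₂ * ρ)).trace
      = (ρ ^ (-(k₁ + k₂ : ℤ) + 1) * (B₁ * A₂)).trace := by
    rw [show P * (ρ * B₁) * (A₂ * ρ) = (P * ρ * B₁ * A₂) * ρ by noncomm_ring,
      Matrix.trace_mul_comm, ← e3]
    congr 1; noncomm_ring
  have t4 : (P * (ρ * B₁) * (ρ * B₂)).trace
      = (ρ ^ (-(k₁ + k₂ : ℤ)) * (B₁ * ρ * B₂)).trace := by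
    rw [← e2]; congr 1; noncomm_ring
  calc (P * (A₁ * ρ + ρ * B₁) * (A₂ * ρ + ρ * B₂)).trace
      = (P * (A₁ * ρ) * (A₂ * ρ)).trace + (P * (A₁ * ρ) * (ρ * B₂)).trace
        + (P * (ρ * B₁) * (A₂ * ρ)).trace + (P * (ρ * B₁) * (ρ * B₂)).trace := by
        simp only [mul_add, add_mul, Matrix.trace_add]; ring
    _ = _ := by
        rw [t1, t2, t3, t4, mul_add, Matrix.trace_add]; ring
end

section
/- Let H be a Hermitian matrix and L a matrix on ℂ^d; set K = −(1/2)L*L − iH, define the adjoint Lindblad generator 𝓛*(σ) = LσL* + Kσ + σK* and the Lindblad generator 𝓛(X) = L*XL − (1/2)L*LX − (1/2)XL*L − i(XH − HX). Suppose ρ : ℝ → Matrix (Fin d) (Fin d) ℂ is differentiable with derivative ρ'(t) = 𝓛*(ρ(t)) for all t (i.e. ρ solves the master equation dρ/dt = 𝓛*(ρ)), and that ρ(t) is a faithful density matrix for every t. Then the von Neumann entropy t ↦ S(ρ(t)) is differentiable with d/dt S(ρ(t)) = −tr( ρ(t) · 𝓛(log ρ(t)) ). -/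
open Matrix Kronecker BigOperators
open scoped ComplexOrder

/-- The Lindblad generator  𝓛(X) = L*XL − (1/2)L*LX − (1/2)XL*L − i[X,H]. -/
noncomputable def lindblad {d : ℕ} (H L X : Matrix (Fin d) (Fin d) ℂ) :
    Matrix (Fin d) (Fin d) ℂ :=
  Lᴴ * X * L - (1 / 2 : ℂ) • (Lᴴ * L * X) - (1 / 2 : ℂ) • (X * (Lᴴ * L)) -
    Complex.I • (X * H - H * X)

/-- The adjoint Lindblad generator  𝓛*(σ) = LσL* + Kσ + σK*  with
K = −(1/2)L*L − iH. -/
noncomputable def lindbladAdj {d : ℕ} (H L σ : Matrix (Fin d) (Fin d) ℂ) :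
    Matrix (Fin d) (Fin d) ℂ :=
  L * σ * Lᴴ + (-((1 / 2 : ℂ) • (Lᴴ * L)) - Complex.I • H) * σ +
    σ * (-((1 / 2 : ℂ) • (Lᴴ * L)) - Complex.I • H)ᴴ

/-!
Klein's inequality: if `f` lies above its tangent lines `y ↦ f x + f' x * (y - x)`, then
`tr f(A) + tr (f'(A) (B - A)) ≤ tr f(B)` for Hermitian `A`, `B`; it is the sum of the
scalar inequalities over pairs of eigenvalues, weighted by the overlaps `|⟨uᵢ, vⱼ⟩|²` of the
two eigenbases. Used for `(ρ t, ρ s)` and for `(ρ s, ρ t)`, it traps `tr f(ρ s) - tr f(ρ t)`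
between `tr (f'(ρ t) Δ)` and `tr (f'(ρ s) Δ)`, where `Δ = ρ s - ρ t`. By continuity of the
functional calculus the gap is `o(s - t)`, so `tr f(ρ)` has derivative `tr (f'(ρ) ρ')`.
For `f x = x log x` and `ρ' = 𝓛*(ρ)` this is
`tr ((log ρ + 1) 𝓛*(ρ)) = tr (ρ 𝓛(log ρ + 1)) = tr (ρ 𝓛(log ρ))`, as `𝓛(1) = 0`.
-/

open Filter Asymptotics Topology
-- the C⋆-algebra norm, under which `cfc` is continuous in its argument
open scoped Matrix.Norms.L2Operator

namespace Matrix

variable {n : Type*} [Fintype n] [DecidableEq n]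

lemma hasDerivAt_of_hasDerivAt_apply {ρ : ℝ → Matrix n n ℂ} {ρ' : Matrix n n ℂ} {t : ℝ}
    (h : ∀ i j, HasDerivAt (fun s => ρ s i j) (ρ' i j) t) : HasDerivAt ρ ρ' t := by
  rw [hasDerivAt_iff_tendsto_slope]
  exact tendsto_pi_nhds.2 fun i => tendsto_pi_nhds.2 fun j =>
    hasDerivAt_iff_tendsto_slope.mp (h i j)

lemma PosDef.spectrum_subset_Ioi {A : Matrix n n ℂ} (hA : A.PosDef) :
    spectrum ℝ A ⊆ Set.Ioi 0 := by
  rw [hA.isHermitian.spectrum_real_eq_range_eigenvalues]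
  rintro _ ⟨i, rfl⟩
  exact hA.eigenvalues_pos i

lemma re_trace_diagonal_mul_mul_diagonal_mul_conjTranspose (p q : n → ℝ) (W : Matrix n n ℂ) :
    (diagonal (fun i => (p i : ℂ)) * W * diagonal (fun j => (q j : ℂ)) * Wᴴ).trace.re =
      ∑ i, ∑ j, p i * q j * Complex.normSq (W i j) := by
  simp only [trace, diag, Complex.re_sum]
  refine Finset.sum_congr rfl fun i _ => ?_
  simp only [mul_apply (M := _ * _ * _), mul_diagonal, diagonal_mul, conjTranspose_apply,
    Complex.re_sum, Complex.star_def]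
  refine Finset.sum_congr rfl fun j _ => ?_
  have h : (p i : ℂ) * W i j * q j * (starRingEnd ℂ) (W i j) =
      (p i * q j * Complex.normSq (W i j) : ℝ) := by
    push_cast
    rw [Complex.normSq_eq_conj_mul_self]
    ring
  rw [h, Complex.ofReal_re]

lemma IsHermitian.re_trace_cfc_mul_cfc {A B : Matrix n n ℂ} (hA : A.IsHermitian)
    (hB : B.IsHermitian) (g h : ℝ → ℝ) :
    (cfc g A * cfc h B).trace.re = ∑ i, ∑ j, g (hA.eigenvalues i) * h (hB.eigenvalues j) *
      Complex.normSq
        ((star (hA.eigenvectorUnitary : Matrix n n ℂ) * hB.eigenvectorUnitary) i j) := by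
  set U : Matrix n n ℂ := (hA.eigenvectorUnitary : Matrix n n ℂ)
  set V : Matrix n n ℂ := (hB.eigenvectorUnitary : Matrix n n ℂ)
  set Dg : Matrix n n ℂ := diagonal (fun i => (g (hA.eigenvalues i) : ℂ))
  set Dh : Matrix n n ℂ := diagonal (fun j => (h (hB.eigenvalues j) : ℂ))
  have hcyc : (U * Dg * star U * (V * Dh * star V)).trace
      = (Dg * (star U * V) * Dh * (star U * V)ᴴ).trace := by
    rw [conjTranspose_mul, ← star_eq_conjTranspose, ← star_eq_conjTranspose, star_star]
    calc (U * Dg * star U * (V * Dh * star V)).trace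
        = (U * (Dg * star U * V * Dh * star V)).trace := by simp only [Matrix.mul_assoc]
      _ = (Dg * star U * V * Dh * star V * U).trace := trace_mul_comm _ _
      _ = _ := by simp only [Matrix.mul_assoc]
  rw [hA.cfc_eq, hB.cfc_eq, IsHermitian.cfc, IsHermitian.cfc, Unitary.conjStarAlgAut_apply,
    Unitary.conjStarAlgAut_apply]
  exact congr_arg Complex.re hcyc |>.trans
    (re_trace_diagonal_mul_mul_diagonal_mul_conjTranspose _ _ _)

theorem IsHermitian.klein_inequality {A B : Matrix n n ℂ} (hA : A.IsHermitian)
    (hB : B.IsHermitian) {f f' : ℝ → ℝ}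
    (htangent : ∀ x ∈ spectrum ℝ A, ∀ y ∈ spectrum ℝ B, f x + f' x * (y - x) ≤ f y) :
    (cfc f A).trace.re + (cfc f' A * (B - A)).trace.re ≤ (cfc f B).trace.re := by
  -- write every term as `tr (cfc g A * cfc h B)`, so that all four are sums with the same weights
  have hfA : cfc f A = cfc f A * cfc (fun _ => (1 : ℝ)) B := by rw [cfc_const_one ℝ B, mul_one]
  have hfB : cfc f B = cfc (fun _ => (1 : ℝ)) A * cfc f B := by rw [cfc_const_one ℝ A, one_mul]
  have hf'A : cfc f' A * A = cfc (fun x => f' x * x) A * cfc (fun _ => (1 : ℝ)) B := by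
    rw [cfc_const_one ℝ B, mul_one, cfc_mul f' (fun x => x) A
      (A.finite_real_spectrum.continuousOn _) (A.finite_real_spectrum.continuousOn _),
      cfc_id' ℝ A]
  have hf'B : cfc f' A * B = cfc f' A * cfc (id : ℝ → ℝ) B := by rw [cfc_id ℝ B]
  rw [Matrix.mul_sub, trace_sub, Complex.sub_re, hf'B, hf'A, hfA, hfB,
    hA.re_trace_cfc_mul_cfc hB, hA.re_trace_cfc_mul_cfc hB, hA.re_trace_cfc_mul_cfc hB,
    hA.re_trace_cfc_mul_cfc hB, ← Finset.sum_sub_distrib, ← Finset.sum_add_distrib]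
  refine Finset.sum_le_sum fun i _ => ?_
  rw [← Finset.sum_sub_distrib, ← Finset.sum_add_distrib]
  refine Finset.sum_le_sum fun j _ => ?_
  have h := htangent _ (hA.eigenvalues_mem_spectrum_real i) _ (hB.eigenvalues_mem_spectrum_real j)
  have hw := Complex.normSq_nonneg
    ((star (hA.eigenvectorUnitary : Matrix n n ℂ) * hB.eigenvectorUnitary) i j)
  simp only [id]
  nlinarith

theorem hasDerivAt_re_trace_cfc {ρ : ℝ → Matrix n n ℂ} {ρ' : Matrix n n ℂ} {t : ℝ}
    {D : Set ℝ} {f f' : ℝ → ℝ} (hD : IsOpen D) (hf' : ContinuousOn f' D)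
    (htangent : ∀ x ∈ D, ∀ y ∈ D, f x + f' x * (y - x) ≤ f y)
    (hρ : ∀ᶠ s in 𝓝 t, (ρ s).IsHermitian ∧ spectrum ℝ (ρ s) ⊆ D)
    (hderiv : HasDerivAt ρ ρ' t) :
    HasDerivAt (fun s => (cfc f (ρ s)).trace.re) ((cfc f' (ρ t) * ρ').trace.re) t := by
  let ℓ : Matrix n n ℂ →L[ℝ] ℝ := Complex.reCLM.comp
    (LinearMap.toContinuousLinearMap ((traceLinearMap n ℂ ℂ).restrictScalars ℝ))
  have hℓ : ∀ M, ℓ M = M.trace.re := fun _ => rfl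
  set F : ℝ → ℝ := fun s => (cfc f (ρ s)).trace.re
  set G : ℝ → Matrix n n ℂ := fun s => cfc f' (ρ s)
  have hG : Tendsto (fun s => G s - G t) (𝓝 t) (𝓝 0) := by
    set S : Set (Matrix n n ℂ) := {A | IsSelfAdjoint A ∧ spectrum ℝ A ⊆ D}
    have hcont : ContinuousOn (cfc f') S :=
      ContinuousOn.cfc_of_mem_nhdsSet f' (a := id)
        (hD.mem_nhdsSet.mpr (Set.iUnion₂_subset fun _ hA => hA.2)) continuousOn_id
        (fun _ hA => hA.1) hf'
    have hρS : Tendsto ρ (𝓝 t) (𝓝[S] ρ t) :=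
      tendsto_nhdsWithin_iff.mpr ⟨hderiv.continuousAt.tendsto, hρ.mono fun _ hs => hs⟩
    exact tendsto_sub_nhds_zero_iff.mpr
      ((hcont.continuousWithinAt hρ.self_of_nhds).tendsto.comp hρS)
  have hsandwich : ∀ᶠ s in 𝓝 t, 0 ≤ F s - F t - ℓ (G t * (ρ s - ρ t)) ∧
      F s - F t - ℓ (G t * (ρ s - ρ t)) ≤ ℓ ((G s - G t) * (ρ s - ρ t)) := by
    obtain ⟨hρt, hspect⟩ := hρ.self_of_nhds
    filter_upwards [hρ] with s ⟨hρs, hspecs⟩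
    have hts := hρt.klein_inequality hρs (f := f) (f' := f')
      fun x hx y hy => htangent x (hspect hx) y (hspecs hy)
    have hst := hρs.klein_inequality hρt (f := f) (f' := f')
      fun x hx y hy => htangent x (hspecs hx) y (hspect hy)
    simp only [hℓ, F, G, mul_sub, sub_mul, trace_sub, Complex.sub_re] at hts hst ⊢
    constructor <;> linarith
  have hgap : (fun s => ℓ ((G s - G t) * (ρ s - ρ t))) =o[𝓝 t] fun s => s - t := by
    refine (ℓ.isBigO_comp _ _).trans_isLittleO ?_
    simpa using (isLittleO_one_iff ℝ |>.mpr hG).mul_isBigO hderiv.isBigO_sub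
  have hlin : (fun s => F s - F t - ℓ (G t * (ρ s - ρ t))) =o[𝓝 t] fun s => s - t := by
    refine IsBigO.trans_isLittleO (IsBigO.of_bound 1 ?_) hgap
    filter_upwards [hsandwich] with s hs
    rw [one_mul, Real.norm_eq_abs, Real.norm_eq_abs, abs_of_nonneg hs.1,
      abs_of_nonneg (hs.1.trans hs.2)]
    exact hs.2
  have hrest : (fun s => ℓ (G t * (ρ s - ρ t - (s - t) • ρ'))) =o[𝓝 t] fun s => s - t :=
    (ℓ.isBigO_comp _ _).trans_isLittleO
      ((hasDerivAt_iff_isLittleO.mp hderiv).const_mul_left (G t))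
  rw [hasDerivAt_iff_isLittleO]
  refine (hlin.add hrest).congr_left fun s => ?_
  simp only [hℓ, mul_sub, mul_smul_comm, trace_sub, trace_smul, Complex.sub_re, Complex.smul_re,
    smul_eq_mul]
  ring

lemma IsHermitian.matLog_eq_cfc {A : Matrix n n ℂ} (hA : A.IsHermitian) :
    matLog A = cfc Real.log A := by
  rw [matLog, dif_pos hA, hA.cfc_eq, IsHermitian.cfc, Unitary.conjStarAlgAut_apply]
  rfl

lemma IsHermitian.vnEntropy_eq {A : Matrix n n ℂ} (hA : A.IsHermitian) :
    vnEntropy A = -(cfc (fun x => x * Real.log x) A).trace.re := by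
  rw [vnEntropy, hA.matLog_eq_cfc, cfc_mul (fun x => x) Real.log A
    (A.finite_real_spectrum.continuousOn _) (A.finite_real_spectrum.continuousOn _),
    cfc_id' ℝ A, Complex.neg_re]

lemma IsHermitian.cfc_log_add_one {A : Matrix n n ℂ} (hA : A.IsHermitian) :
    cfc (fun x => Real.log x + 1) A = matLog A + 1 := by
  rw [cfc_add A Real.log (fun _ => 1) (A.finite_real_spectrum.continuousOn _)
    (A.finite_real_spectrum.continuousOn _), cfc_const_one ℝ A, hA.matLog_eq_cfc]

end Matrix

lemma Real.mul_log_add_log_add_one_mul_sub_le {x y : ℝ} (hx : 0 < x) (hy : 0 < y) :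
    x * Real.log x + (Real.log x + 1) * (y - x) ≤ y * Real.log y := by
  have h := Real.one_sub_inv_le_log_of_pos (div_pos hy hx)
  rw [Real.log_div hy.ne' hx.ne', inv_div] at h
  have h' := mul_le_mul_of_nonneg_left h hy.le
  rw [mul_one_sub, mul_div_cancel₀ x hy.ne'] at h'
  linarith

lemma lindblad_add_one {d : ℕ} (H L X : Matrix (Fin d) (Fin d) ℂ) :
    lindblad H L (X + 1) = lindblad H L X := by
  simp only [lindblad, Matrix.mul_add, Matrix.add_mul, Matrix.mul_one, Matrix.one_mul]
  module

lemma trace_mul_lindbladAdj {d : ℕ} {H : Matrix (Fin d) (Fin d) ℂ} (hH : H.IsHermitian)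
    (L A X : Matrix (Fin d) (Fin d) ℂ) :
    (X * lindbladAdj H L A).trace = (A * lindblad H L X).trace := by
  rw [lindbladAdj, lindblad]
  set K : Matrix (Fin d) (Fin d) ℂ := -((1 / 2 : ℂ) • (Lᴴ * L)) - Complex.I • H
  have hK : Kᴴ = -((1 / 2 : ℂ) • (Lᴴ * L)) + Complex.I • H := by
    simp only [K, conjTranspose_sub, conjTranspose_neg, conjTranspose_smul, conjTranspose_mul,
      conjTranspose_conjTranspose, hH.eq, Complex.star_def, Complex.conj_I, map_div₀, map_one,
      map_ofNat, neg_smul, sub_neg_eq_add]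
  have hcyc : (X * (L * A * Lᴴ + K * A + A * Kᴴ)).trace
      = (A * (Lᴴ * X * L + X * K + Kᴴ * X)).trace := by
    simp only [Matrix.mul_add, trace_add]
    congr 1
    congr 1
    · rw [show X * (L * A * Lᴴ) = X * L * (A * Lᴴ) by simp only [Matrix.mul_assoc],
        trace_mul_comm,
        show A * Lᴴ * (X * L) = A * (Lᴴ * X * L) by simp only [Matrix.mul_assoc]]
    · rw [← Matrix.mul_assoc, trace_mul_comm]
    · rw [trace_mul_comm, Matrix.mul_assoc]
  rw [hcyc, hK]
  congr 2
  simp only [K, Matrix.mul_sub, Matrix.add_mul, Matrix.mul_neg, Matrix.neg_mul, mul_smul_comm,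
    smul_mul_assoc, smul_sub]
  module

/-- along a solution of the master equation  dρ/dt = 𝓛*(ρ)  consisting
of faithful states, the von Neumann entropy satisfies
d/dt S(ρ(t)) = −tr(ρ(t) 𝓛(log ρ(t))). -/
theorem entropy_rate_master_equation {d : ℕ} (H L : Matrix (Fin d) (Fin d) ℂ)
    (hH : H.IsHermitian) (ρ : ℝ → Matrix (Fin d) (Fin d) ℂ)
    (hderiv : ∀ (t : ℝ) (i j : Fin d),
      HasDerivAt (fun s => ρ s i j) (lindbladAdj H L (ρ t) i j) t)
    (hρ : ∀ t : ℝ, IsFaithfulDensityMatrix (ρ t)) :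
    ∀ t : ℝ, HasDerivAt (fun s => vnEntropy (ρ s))
      (-((ρ t * lindblad H L (matLog (ρ t))).trace.re)) t := by
  intro t
  have hherm : ∀ s, (ρ s).IsHermitian := fun s => (hρ s).1.isHermitian
  have hrate := (Matrix.hasDerivAt_re_trace_cfc (f := fun x => x * Real.log x)
    (f' := fun x => Real.log x + 1) isOpen_Ioi
    ((Real.continuousOn_log.mono fun _ hx => (Set.mem_Ioi.mp hx).ne').add continuousOn_const)
    (fun x hx y hy => Real.mul_log_add_log_add_one_mul_sub_le hx hy)
    (Eventually.of_forall fun s => ⟨hherm s, (hρ s).1.spectrum_subset_Ioi⟩)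
    (Matrix.hasDerivAt_of_hasDerivAt_apply (hderiv t))).fun_neg
  rw [(hherm t).cfc_log_add_one, trace_mul_lindbladAdj hH, lindblad_add_one] at hrate
  simpa only [(hherm _).vnEntropy_eq] using hrate
end
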